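/- For d > 3 and N = (d+1)(d+2)/6, the numbers a = (−√(d+2)−3)/(d−1) and b = (√(d+2)−3)/(d−1) satisfy: any set of N unit vectors in ℝ^{d-1} whose pairwise inner products all lie in {a,b} and which forms a tight frame (∑xxᵀ = (N/(d−1))I) has ∑_{y≠x}⟨x,y⟩² = N/(d−1) − 1 for each x; moreover (N/(d−1) − 1 − (N−1)b²)/(a² − b²) = (k−1)(k−2)(k²−3)/12 where k = √(d+2). -/

import Mathlib

open scoped RealInnerProductSpace

/- For a unit vector x of a tight frame X with frame constant c, testing the frame identity
∑_{y ∈ X} ⟪v, y⟫² = c ⟪v, v⟫ at v = x and splitting off the term y = x gives the first claim.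
The second is an identity of rational functions in k = √(d + 2) once d is written as k² - 2. -/

theorem sum_erase_inner_sq_of_tight_frame {E : Type*} [NormedAddCommGroup E]
    [InnerProductSpace ℝ E] [DecidableEq E] {X : Finset E} {c : ℝ}
    (htf : ∀ v : E, ∑ y ∈ X, ⟪v, y⟫ ^ 2 = c * ⟪v, v⟫) {x : E} (hx : x ∈ X) (hx1 : ‖x‖ = 1) :
    ∑ y ∈ X.erase x, ⟪x, y⟫ ^ 2 = c - 1 := by
  have hxx : ⟪x, x⟫ = 1 := by rw [real_inner_self_eq_norm_sq, hx1, one_pow]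
  have h := htf x
  rw [← Finset.add_sum_erase _ _ hx, hxx] at h
  linarith

theorem valency_identity {k : ℝ} (hk0 : k ≠ 0) (hk3 : k ^ 2 - 3 ≠ 0) :
    let N := (k ^ 2 - 1) * k ^ 2 / 6
    let a := (-k - 3) / (k ^ 2 - 3)
    let b := (k - 3) / (k ^ 2 - 3)
    (N / (k ^ 2 - 3) - 1 - (N - 1) * b ^ 2) / (a ^ 2 - b ^ 2)
      = (k - 1) * (k - 2) * (k ^ 2 - 3) / 12 := by
  intro N a b
  have hab : a ^ 2 - b ^ 2 = 12 * k / (k ^ 2 - 3) ^ 2 := by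
    simp only [a, b]; field_simp; ring
  rw [hab, div_eq_iff (by positivity)]
  simp only [N, b]
  field_simp
  ring

theorem stmt19_general (d : ℕ) (hd : 3 < d) [DecidableEq (EuclideanSpace ℝ (Fin (d - 1)))]
    (X : Finset (EuclideanSpace ℝ (Fin (d - 1))))
    (N : ℝ) (hN : N = ((d : ℝ) + 1) * ((d : ℝ) + 2) / 6)
    (k a b : ℝ) (hk : k = Real.sqrt ((d : ℝ) + 2))
    (ha : a = (-k - 3) / ((d : ℝ) - 1)) (hb : b = (k - 3) / ((d : ℝ) - 1))
    (hunit : ∀ x ∈ X, ‖x‖ = 1)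
    (htf : ∀ v : EuclideanSpace ℝ (Fin (d - 1)),
      ∑ y ∈ X, ⟪v, y⟫ ^ 2 = (N / ((d : ℝ) - 1)) * ⟪v, v⟫) :
    (∀ x ∈ X, ∑ y ∈ X.erase x, ⟪x, y⟫ ^ 2 = N / ((d : ℝ) - 1) - 1) ∧
    (N / ((d : ℝ) - 1) - 1 - (N - 1) * b ^ 2) / (a ^ 2 - b ^ 2)
      = (k - 1) * (k - 2) * (k ^ 2 - 3) / 12 := by
  refine ⟨fun x hx => sum_erase_inner_sq_of_tight_frame htf hx (hunit x hx), ?_⟩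
  have hd4 : (4 : ℝ) ≤ d := by exact_mod_cast hd
  have hdk : (d : ℝ) = k ^ 2 - 2 := by
    rw [hk, Real.sq_sqrt (by linarith)]; ring
  have hk0 : k ≠ 0 := by
    rw [hk]; exact (Real.sqrt_pos.mpr (by linarith)).ne'
  have hk3 : k ^ 2 - 3 ≠ 0 := by linarith
  have hd1 : (d : ℝ) - 1 = k ^ 2 - 3 := by rw [hdk]; ring
  have hN' : N = (k ^ 2 - 1) * k ^ 2 / 6 := by rw [hN, hdk]; ring
  rw [ha, hb, hd1, hN']
  exact valency_identity hk0 hk3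

theorem stmt19 (d : ℕ) (hd : 3 < d) [DecidableEq (EuclideanSpace ℝ (Fin (d - 1)))]
    (X : Finset (EuclideanSpace ℝ (Fin (d - 1))))
    (N : ℝ) (hN : N = ((d : ℝ) + 1) * ((d : ℝ) + 2) / 6)
    (k a b : ℝ) (hk : k = Real.sqrt ((d : ℝ) + 2))
    (ha : a = (-k - 3) / ((d : ℝ) - 1)) (hb : b = (k - 3) / ((d : ℝ) - 1))
    (hcard : (X.card : ℝ) = N)
    (hunit : ∀ x ∈ X, ‖x‖ = 1)
    (hang : ∀ x ∈ X, ∀ y ∈ X, x ≠ y → ⟪x, y⟫ = a ∨ ⟪x, y⟫ = b)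
    (htf : ∀ v : EuclideanSpace ℝ (Fin (d - 1)),
      ∑ y ∈ X, ⟪v, y⟫ ^ 2 = (N / ((d : ℝ) - 1)) * ⟪v, v⟫) :
    (∀ x ∈ X, ∑ y ∈ X.erase x, ⟪x, y⟫ ^ 2 = N / ((d : ℝ) - 1) - 1) ∧
    (N / ((d : ℝ) - 1) - 1 - (N - 1) * b ^ 2) / (a ^ 2 - b ^ 2)
      = (k - 1) * (k - 2) * (k ^ 2 - 3) / 12 :=
  stmt19_general d hd X N hN k a b hk ha hb hunit htf
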